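/- (Likelihood-ratio / REINFORCE form of the policy gradient in the deterministic-grid case.) The map θ ↦ J^θ_0(s₀,a₀) is differentiable on ℝ, and for every θ ∈ ℝ its derivative equals E^θ[ ( Σ_{k=0}^{N−1} ∂_θ π^θ_k(A_k|S_k,A_{k−1}) / π^θ_k(A_k|S_k,A_{k−1}) ) · G ], where G is the total return of the trajectory. -/

import Mathlib

open Finset

noncomputable section

/-- `stateAt s₀ ω k` is the state `S_k` along a trajectory `ω = (A_0,S_1,…,A_{N-1},S_N)`:
`stateAt s₀ ω 0 = s₀` and `stateAt s₀ ω (k+1) = (ω k).2 = S_{k+1}`. -/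
def stateAt {S A : Type*} {N : ℕ} (s₀ : S) (ω : Fin N → A × S) : ℕ → S
  | 0 => s₀
  | k + 1 => if h : k < N then (ω ⟨k, h⟩).2 else s₀

/-- `actAt a₀ ω k` is the action `A_{k-1}` along a trajectory:
`actAt a₀ ω 0 = a₀` (i.e. `A_{-1} = a₀`) and `actAt a₀ ω (k+1) = (ω k).1 = A_k`. -/
def actAt {S A : Type*} {N : ℕ} (a₀ : A) (ω : Fin N → A × S) : ℕ → A
  | 0 => a₀
  | k + 1 => if h : k < N then (ω ⟨k, h⟩).1 else a₀

/-- The trajectory weight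
`W^θ(ω) = ∏_{k=0}^{N-1} π^θ_k(A_k | S_k, A_{k-1}) · p_k(S_k, A_k, S_{k+1})`,
where `π k θ s a a'` denotes `π^θ_k(a' | s, a)` and `p k s a s'` denotes `p_k(s,a,s')`. -/
def weight {S A : Type*} (N : ℕ) (p : ℕ → S → A → S → ℝ)
    (π : ℕ → ℝ → S → A → A → ℝ) (θ : ℝ) (s₀ : S) (a₀ : A) (ω : Fin N → A × S) : ℝ :=
  ∏ k ∈ Finset.range N,
    π k θ (stateAt s₀ ω k) (actAt a₀ ω k) (actAt a₀ ω (k + 1)) *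
      p k (stateAt s₀ ω k) (actAt a₀ ω (k + 1)) (stateAt s₀ ω (k + 1))

/-- Auxiliary value function defined by backward recursion on the number of remaining
steps: `Jaux N p π f c g θ m = J^θ_{N-m}`.  In particular `Jaux … 0 = J^θ_N = g` and
`J^θ_k(s,a) = ∑_{a'} π^θ_k(a'|s,a) · (V^θ_k(s,a') − c_k(s,a,a'))` with
`V^θ_k(s,a') = f_k(s,a') + ∑_{s'} p_k(s,a',s') J^θ_{k+1}(s',a')`. -/
def Jaux {S A : Type*} [Fintype S] [Fintype A] (N : ℕ) (p : ℕ → S → A → S → ℝ)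
    (π : ℕ → ℝ → S → A → A → ℝ) (f : ℕ → S → A → ℝ) (c : ℕ → S → A → A → ℝ)
    (g : S → A → ℝ) (θ : ℝ) : ℕ → S → A → ℝ
  | 0 => g
  | m + 1 => fun s a =>
      ∑ a' : A, π (N - (m + 1)) θ s a a' *
        ((f (N - (m + 1)) s a' +
            ∑ s' : S, p (N - (m + 1)) s a' s' * Jaux N p π f c g θ m s' a') -
          c (N - (m + 1)) s a a')

/-- The pre-action value function `J^θ_k`. -/
def Jval {S A : Type*} [Fintype S] [Fintype A] (N : ℕ) (p : ℕ → S → A → S → ℝ)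
    (π : ℕ → ℝ → S → A → A → ℝ) (f : ℕ → S → A → ℝ) (c : ℕ → S → A → A → ℝ)
    (g : S → A → ℝ) (θ : ℝ) (k : ℕ) : S → A → ℝ :=
  Jaux N p π f c g θ (N - k)

/-- The post-action value function
`V^θ_k(s,a') = f_k(s,a') + ∑_{s'} p_k(s,a',s') J^θ_{k+1}(s',a')`. -/
def Vval {S A : Type*} [Fintype S] [Fintype A] (N : ℕ) (p : ℕ → S → A → S → ℝ)
    (π : ℕ → ℝ → S → A → A → ℝ) (f : ℕ → S → A → ℝ) (c : ℕ → S → A → A → ℝ)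
    (g : S → A → ℝ) (θ : ℝ) (k : ℕ) (s : S) (a' : A) : ℝ :=
  f k s a' + ∑ s' : S, p k s a' s' * Jval N p π f c g θ (k + 1) s' a'

/-- The total return
`G(ω) = ∑_{k=0}^{N-1} [f_k(S_k,A_k) − c_k(S_k,A_{k-1},A_k)] + g(S_N,A_{N-1})`. -/
def totalReturn {S A : Type*} (N : ℕ) (f : ℕ → S → A → ℝ) (c : ℕ → S → A → A → ℝ)
    (g : S → A → ℝ) (s₀ : S) (a₀ : A) (ω : Fin N → A × S) : ℝ :=
  (∑ k ∈ Finset.range N,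
      (f k (stateAt s₀ ω k) (actAt a₀ ω (k + 1)) -
        c k (stateAt s₀ ω k) (actAt a₀ ω k) (actAt a₀ ω (k + 1)))) +
    g (stateAt s₀ ω N) (actAt a₀ ω N)

/-!
Backward induction on the Bellman recursion identifies `J^θ_0(s₀, a₀)` with the finite sum
`∑_ω W^θ(ω) G(ω)`: peeling off the first step of a trajectory turns the expected return over `m + 1`
steps into the recursion for `J`, because the weights of the remaining `m` steps sum to `1`.
Only `W^θ` depends on `θ`, and as its policy factors never vanish, the derivative of the product
`W^θ` is `W^θ` times the sum of the logarithmic derivatives of those factors.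
-/

theorem Fin.sum_univ_pi_cons {α M : Type*} [Fintype α] [AddCommMonoid M] {m : ℕ}
    (F : (Fin (m + 1) → α) → M) :
    ∑ ω : Fin (m + 1) → α, F ω = ∑ x : α, ∑ ω : Fin m → α, F (Fin.cons x ω) := by
  rw [← Equiv.sum_comp (Fin.consEquiv fun _ => α) F, Fintype.sum_prod_type]
  rfl

theorem hasDerivAt_finsetProd_of_ne_zero {𝕜 𝕜' ι : Type*} [NontriviallyNormedField 𝕜]
    [NontriviallyNormedField 𝕜'] [NormedAlgebra 𝕜 𝕜'] {s : Finset ι} {f : ι → 𝕜 → 𝕜'} {x : 𝕜}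
    (hf : ∀ i ∈ s, f i x ≠ 0) (hd : ∀ i ∈ s, DifferentiableAt 𝕜 (f i) x) :
    HasDerivAt (∏ i ∈ s, f i ·) ((∏ i ∈ s, f i x) * ∑ i ∈ s, deriv (f i) x / f i x) x := by
  have hprod : ∏ i ∈ s, f i x ≠ 0 := Finset.prod_ne_zero_iff.mpr hf
  have hlog := logDeriv_prod hf hd
  simp only [logDeriv_apply] at hlog
  rw [← hlog, mul_div_cancel₀ _ hprod]
  exact (DifferentiableAt.fun_finsetProd hd).hasDerivAt

section Trajectory

variable {S A : Type*} {m : ℕ}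

theorem stateAt_cons_succ (s : S) (x : A × S) (ω : Fin m → A × S) {j : ℕ} (hj : j ≤ m) :
    stateAt s (Fin.cons x ω : Fin (m + 1) → A × S) (j + 1) = stateAt x.2 ω j := by
  cases j with
  | zero => simp [stateAt]
  | succ i =>
    have hi : i < m := hj
    simp [stateAt, hi, Fin.cons, Fin.cases_succ']

theorem actAt_cons_succ (a : A) (x : A × S) (ω : Fin m → A × S) {j : ℕ} (hj : j ≤ m) :
    actAt a (Fin.cons x ω : Fin (m + 1) → A × S) (j + 1) = actAt x.1 ω j := by
  cases j with
  | zero => simp [actAt]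
  | succ i =>
    have hi : i < m := hj
    simp [actAt, hi, Fin.cons, Fin.cases_succ']

theorem weight_cons (p : ℕ → S → A → S → ℝ) (π : ℕ → ℝ → S → A → A → ℝ) (θ : ℝ)
    (s : S) (a : A) (x : A × S) (ω : Fin m → A × S) :
    weight (m + 1) p π θ s a (Fin.cons x ω) =
      π 0 θ s a x.1 * p 0 s x.1 x.2 *
        weight m (fun k => p (k + 1)) (fun k => π (k + 1)) θ x.2 x.1 ω := by
  rw [weight, Finset.prod_range_succ', weight,
    stateAt_cons_succ s x ω (Nat.zero_le m), actAt_cons_succ a x ω (Nat.zero_le m),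
    Finset.prod_congr rfl fun j (hj : j ∈ Finset.range m) => by
      have hj : j < m := Finset.mem_range.mp hj
      rw [stateAt_cons_succ s x ω hj.le, stateAt_cons_succ s x ω hj,
        actAt_cons_succ a x ω hj.le, actAt_cons_succ a x ω hj]]
  exact mul_comm _ _

theorem totalReturn_cons (f : ℕ → S → A → ℝ) (c : ℕ → S → A → A → ℝ) (g : S → A → ℝ)
    (s : S) (a : A) (x : A × S) (ω : Fin m → A × S) :
    totalReturn (m + 1) f c g s a (Fin.cons x ω) =
      f 0 s x.1 - c 0 s a x.1 +
        totalReturn m (fun k => f (k + 1)) (fun k => c (k + 1)) g x.2 x.1 ω := by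
  rw [totalReturn, Finset.sum_range_succ', totalReturn,
    stateAt_cons_succ s x ω le_rfl, actAt_cons_succ a x ω le_rfl,
    actAt_cons_succ a x ω (Nat.zero_le m),
    Finset.sum_congr rfl fun j (hj : j ∈ Finset.range m) => by
      have hj : j < m := Finset.mem_range.mp hj
      rw [stateAt_cons_succ s x ω hj.le, actAt_cons_succ a x ω hj.le,
        actAt_cons_succ a x ω hj]]
  exact add_right_comm _ _ _ |>.trans (add_comm _ _)

theorem hasDerivAt_weight {N : ℕ} (p : ℕ → S → A → S → ℝ) {π : ℕ → ℝ → S → A → A → ℝ} {θ : ℝ}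
    (hπ_ne : ∀ k < N, ∀ s a a', π k θ s a a' ≠ 0)
    (hπ_diff : ∀ k < N, ∀ s a a', DifferentiableAt ℝ (fun θ => π k θ s a a') θ)
    (s : S) (a : A) (ω : Fin N → A × S) :
    HasDerivAt (fun θ => weight N p π θ s a ω)
      (weight N p π θ s a ω * ∑ k ∈ Finset.range N,
        deriv (fun θ => π k θ (stateAt s ω k) (actAt a ω k) (actAt a ω (k + 1))) θ /
          π k θ (stateAt s ω k) (actAt a ω k) (actAt a ω (k + 1))) θ := by
  simp only [weight, Finset.prod_mul_distrib]
  have hprod := hasDerivAt_finsetProd_of_ne_zero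
    (f := fun k θ => π k θ (stateAt s ω k) (actAt a ω k) (actAt a ω (k + 1)))
    (fun k hk => hπ_ne k (Finset.mem_range.mp hk) _ _ _)
    (fun k hk => hπ_diff k (Finset.mem_range.mp hk) _ _ _)
  exact (hprod.mul_const _).congr_deriv (by ring)

end Trajectory

section ExpectedReturn

variable {S A : Type*} [Fintype S] [Fintype A]

theorem sum_weight_eq_one {m : ℕ} {p : ℕ → S → A → S → ℝ} {π : ℕ → ℝ → S → A → A → ℝ} {θ : ℝ}
    (hp : ∀ k < m, ∀ s a, ∑ s' : S, p k s a s' = 1)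
    (hπ : ∀ k < m, ∀ s a, ∑ a' : A, π k θ s a a' = 1) (s : S) (a : A) :
    ∑ ω : Fin m → A × S, weight m p π θ s a ω = 1 := by
  induction m generalizing p π s a with
  | zero => simp [weight]
  | succ m ih =>
    have htail : ∀ s a, ∑ ω : Fin m → A × S,
        weight m (fun k => p (k + 1)) (fun k => π (k + 1)) θ s a ω = 1 :=
      ih (fun k hk => hp (k + 1) (by omega)) (fun k hk => hπ (k + 1) (by omega))
    simp only [Fin.sum_univ_pi_cons, weight_cons, ← Finset.mul_sum, htail, mul_one,
      Fintype.sum_prod_type, hp 0 m.succ_pos, hπ 0 m.succ_pos]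

def expectedReturn (m : ℕ) (p : ℕ → S → A → S → ℝ) (π : ℕ → ℝ → S → A → A → ℝ)
    (f : ℕ → S → A → ℝ) (c : ℕ → S → A → A → ℝ) (g : S → A → ℝ) (θ : ℝ) (s : S) (a : A) : ℝ :=
  ∑ ω : Fin m → A × S, weight m p π θ s a ω * totalReturn m f c g s a ω

theorem expectedReturn_succ {m : ℕ} {p : ℕ → S → A → S → ℝ} {π : ℕ → ℝ → S → A → A → ℝ}
    (f : ℕ → S → A → ℝ) (c : ℕ → S → A → A → ℝ) (g : S → A → ℝ) {θ : ℝ}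
    (hp : ∀ k < m + 1, ∀ s a, ∑ s' : S, p k s a s' = 1)
    (hπ : ∀ k < m, ∀ s a, ∑ a' : A, π (k + 1) θ s a a' = 1) (s : S) (a : A) :
    expectedReturn (m + 1) p π f c g θ s a =
      ∑ a' : A, π 0 θ s a a' *
        ((f 0 s a' + ∑ s' : S, p 0 s a' s' * expectedReturn m (fun k => p (k + 1))
            (fun k => π (k + 1)) (fun k => f (k + 1)) (fun k => c (k + 1)) g θ s' a') -
          c 0 s a a') := by
  have htail : ∀ s a, ∑ ω : Fin m → A × S,
      weight m (fun k => p (k + 1)) (fun k => π (k + 1)) θ s a ω = 1 :=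
    sum_weight_eq_one (fun k hk => hp (k + 1) (by omega)) hπ
  rw [expectedReturn, Fin.sum_univ_pi_cons, Fintype.sum_prod_type]
  refine Finset.sum_congr rfl fun a' _ => ?_
  simp only [weight_cons, totalReturn_cons, mul_add, Finset.sum_add_distrib, mul_assoc,
    ← Finset.mul_sum, ← Finset.sum_mul, htail, one_mul, hp 0 m.succ_pos, expectedReturn]
  ring

theorem Jaux_eq_expectedReturn {N : ℕ} {p : ℕ → S → A → S → ℝ} {π : ℕ → ℝ → S → A → A → ℝ}
    (f : ℕ → S → A → ℝ) (c : ℕ → S → A → A → ℝ) (g : S → A → ℝ) {θ : ℝ}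
    (hp : ∀ k < N, ∀ s a, ∑ s' : S, p k s a s' = 1)
    (hπ : ∀ k < N, ∀ s a, ∑ a' : A, π k θ s a a' = 1) {t m : ℕ} (htm : t + m = N) :
    Jaux N p π f c g θ m = expectedReturn m (fun k => p (k + t)) (fun k => π (k + t))
      (fun k => f (k + t)) (fun k => c (k + t)) g θ := by
  induction m generalizing t with
  | zero =>
    funext s a
    simp [Jaux, expectedReturn, weight, totalReturn, stateAt, actAt]
  | succ m ih =>
    funext s a
    have hshift : ∀ k, k + 1 + t = k + (t + 1) := by omega
    rw [expectedReturn_succ _ _ _ (fun k hk => hp (k + t) (by omega))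
      (fun k hk => hπ (k + 1 + t) (by omega))]
    simp only [hshift, ← ih (t := t + 1) (by omega), zero_add, show N - (m + 1) = t by omega, Jaux]

theorem hasDerivAt_expectedReturn {N : ℕ} (p : ℕ → S → A → S → ℝ) {π : ℕ → ℝ → S → A → A → ℝ}
    (f : ℕ → S → A → ℝ) (c : ℕ → S → A → A → ℝ) (g : S → A → ℝ) {θ : ℝ}
    (hπ_ne : ∀ k < N, ∀ s a a', π k θ s a a' ≠ 0)
    (hπ_diff : ∀ k < N, ∀ s a a', DifferentiableAt ℝ (fun θ => π k θ s a a') θ)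
    (s : S) (a : A) :
    HasDerivAt (fun θ => expectedReturn N p π f c g θ s a)
      (∑ ω : Fin N → A × S, weight N p π θ s a ω *
        ((∑ k ∈ Finset.range N,
            deriv (fun θ => π k θ (stateAt s ω k) (actAt a ω k) (actAt a ω (k + 1))) θ /
              π k θ (stateAt s ω k) (actAt a ω k) (actAt a ω (k + 1))) *
          totalReturn N f c g s a ω)) θ := by
  simp only [← mul_assoc]
  exact HasDerivAt.fun_sum fun ω _ =>
    (hasDerivAt_weight p hπ_ne hπ_diff s a ω).mul_const (totalReturn N f c g s a ω)

end ExpectedReturn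

theorem policy_gradient_reinforce_deterministic_grid_general
    {S A : Type*} [Fintype S] [Fintype A]
    (N : ℕ)
    (p : ℕ → S → A → S → ℝ) (f : ℕ → S → A → ℝ) (c : ℕ → S → A → A → ℝ)
    (g : S → A → ℝ) (π : ℕ → ℝ → S → A → A → ℝ)
    (hp_sum : ∀ k < N, ∀ s a, ∑ s' : S, p k s a s' = 1)
    (hπ_pos : ∀ k < N, ∀ (θ : ℝ) (s : S) (a a' : A), 0 < π k θ s a a')
    (hπ_sum : ∀ k < N, ∀ (θ : ℝ) (s : S) (a : A), ∑ a' : A, π k θ s a a' = 1)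
    (hπ_diff : ∀ k < N, ∀ (s : S) (a a' : A), Differentiable ℝ (fun θ => π k θ s a a'))
    (s₀ : S) (a₀ : A) :
    ∀ θ : ℝ,
      HasDerivAt (fun θ' => Jval N p π f c g θ' 0 s₀ a₀)
        (∑ ω : Fin N → A × S, weight N p π θ s₀ a₀ ω *
          ((∑ k ∈ Finset.range N,
              deriv (fun θ' => π k θ' (stateAt s₀ ω k) (actAt a₀ ω k) (actAt a₀ ω (k + 1))) θ /
                π k θ (stateAt s₀ ω k) (actAt a₀ ω k) (actAt a₀ ω (k + 1))) *
            totalReturn N f c g s₀ a₀ ω)) θ := by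
  intro θ
  have hJ : (fun θ' => Jval N p π f c g θ' 0 s₀ a₀) =
      fun θ' => expectedReturn N p π f c g θ' s₀ a₀ := by
    funext θ'
    rw [Jval, Nat.sub_zero, Jaux_eq_expectedReturn f c g hp_sum (hπ_sum · · θ') (zero_add N)]
    rfl
  rw [hJ]
  exact hasDerivAt_expectedReturn p f c g (fun k hk s a a' => (hπ_pos k hk θ s a a').ne')
    (fun k hk s a a' => (hπ_diff k hk s a a').differentiableAt) s₀ a₀

/-- **Likelihood-ratio / REINFORCE form of the policy gradient (deterministic-grid case).**
The map `θ ↦ J^θ_0(s₀,a₀)` is differentiable on `ℝ` and its derivative at every `θ` equals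
`E^θ[ ( ∑_{k=0}^{N-1} ∂_θ π^θ_k(A_k|S_k,A_{k-1}) / π^θ_k(A_k|S_k,A_{k-1}) ) · G ]`,
where `G` is the total return of the trajectory. -/
theorem policy_gradient_reinforce_deterministic_grid
    {S A : Type*} [Fintype S] [Fintype A] [Nonempty S] [Nonempty A]
    (N : ℕ) (hN : 1 ≤ N)
    (p : ℕ → S → A → S → ℝ) (f : ℕ → S → A → ℝ) (c : ℕ → S → A → A → ℝ)
    (g : S → A → ℝ) (π : ℕ → ℝ → S → A → A → ℝ)
    (hp_nonneg : ∀ k < N, ∀ s a s', 0 ≤ p k s a s')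
    (hp_sum : ∀ k < N, ∀ s a, ∑ s' : S, p k s a s' = 1)
    (hπ_pos : ∀ k < N, ∀ (θ : ℝ) (s : S) (a a' : A), 0 < π k θ s a a')
    (hπ_sum : ∀ k < N, ∀ (θ : ℝ) (s : S) (a : A), ∑ a' : A, π k θ s a a' = 1)
    (hπ_diff : ∀ k < N, ∀ (s : S) (a a' : A), Differentiable ℝ (fun θ => π k θ s a a'))
    (s₀ : S) (a₀ : A) :
    ∀ θ : ℝ,
      HasDerivAt (fun θ' => Jval N p π f c g θ' 0 s₀ a₀)
        (∑ ω : Fin N → A × S, weight N p π θ s₀ a₀ ω *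
          ((∑ k ∈ Finset.range N,
              deriv (fun θ' => π k θ' (stateAt s₀ ω k) (actAt a₀ ω k) (actAt a₀ ω (k + 1))) θ /
                π k θ (stateAt s₀ ω k) (actAt a₀ ω k) (actAt a₀ ω (k + 1))) *
            totalReturn N f c g s₀ a₀ ω)) θ :=
  policy_gradient_reinforce_deterministic_grid_general N p f c g π hp_sum hπ_pos hπ_sum hπ_diff s₀
    a₀
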